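/- arXiv:1402.2066 — 5 statements merged into one kernel-verified Lean document; each statement's English description precedes it below -/
import Mathlib

section
/- Let Q(V,E) be a chordal graph with cliques C_1,...,C_l ordered to satisfy the running intersection property. Then for any negative semidefinite matrix H in S^n whose sparsity graph is a subgraph of Q, there exist negative semidefinite matrices H^i in S^{|C_i|}, i=1,...,l, such that H = sum_{i=1}^l E_i H^i E_i^T, where E_i is the 0-1 matrix selecting the rows/columns indexed by C_i. -/
open Matrix Finset

/-- A simple graph is chordal if every cycle of length at least four has a chord,
i.e. an edge of the graph joining two vertices of the cycle that is not an edge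
of the cycle itself. -/
def SimpleGraph.IsChordal {V : Type*} (G : SimpleGraph V) : Prop :=
  ∀ (v : V) (w : G.Walk v v), w.IsCycle → 4 ≤ w.length →
    ∃ a b, a ∈ w.support ∧ b ∈ w.support ∧ G.Adj a b ∧ ¬ w.toSubgraph.Adj a b

/-- `s` is a maximal clique of `G`. -/
def SimpleGraph.IsMaxClique {V : Type*} (G : SimpleGraph V) (s : Finset V) : Prop :=
  G.IsClique ↑s ∧ ∀ t : Finset V, G.IsClique ↑t → s ⊆ t → s = t

/-- The 0-1 matrix whose columns are the standard basis vectors indexed by the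
elements of `C`, i.e. `E = [e_{j₁} … e_{j_r}]` for `C = {j₁ < … < j_r}`. -/
def cliqueSel {n : ℕ} (C : Finset (Fin n)) : Matrix (Fin n) {x // x ∈ C} ℝ :=
  fun i j => if i = (j : Fin n) then 1 else 0

/-! Write `-H` as the Gram matrix of vectors `f v` and peel off the last clique `J`. Let `A` be
the vertices of `J` lying in no earlier clique and project every `f v` orthogonally onto
`span {f a | a ∈ A}`. The rows of `-H` indexed by `A` are supported in `J`, so the projection kills
`f v` for `v ∉ J`: the Gram matrix of the projections is positive semidefinite and supported on
`J × J`, while that of the residuals is positive semidefinite and vanishes on the rows and columns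
of `A`. By the running intersection property the rest of `J` lies in a single earlier clique, so the
residual is supported on the earlier cliques, and induction on the number of cliques finishes. -/

open scoped InnerProductSpace ComplexOrder

section Gram

variable {𝕜 ι κ E : Type*} [RCLike 𝕜] [NormedAddCommGroup E] [InnerProductSpace 𝕜 E]

open scoped MatrixOrder in
theorem Matrix.PosSemidef.exists_eq_gram [Fintype ι] {P : Matrix ι ι 𝕜} (hP : P.PosSemidef) :
    ∃ f : ι → EuclideanSpace 𝕜 ι, P = gram 𝕜 f := by
  classical
  obtain ⟨B, rfl⟩ := CStarAlgebra.nonneg_iff_eq_star_mul_self.mp hP.nonneg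
  refine ⟨fun u => WithLp.toLp 2 fun i => B i u, ?_⟩
  ext u v
  simp [gram_apply, mul_apply, PiLp.inner_apply, mul_comm]

theorem inner_eq_inner_starProjection_add (K : Submodule 𝕜 E) [K.HasOrthogonalProjection]
    (x y : E) :
    ⟪x, y⟫_𝕜 = ⟪K.starProjection x, K.starProjection y⟫_𝕜 +
      ⟪x - K.starProjection x, y - K.starProjection y⟫_𝕜 := by
  have h₁ := K.starProjection_inner_eq_zero x (K.starProjection y) (K.starProjection_apply_mem y)
  have h₂ := K.starProjection_inner_eq_zero y (K.starProjection x) (K.starProjection_apply_mem x)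
  rw [inner_eq_zero_symm] at h₂
  simp only [inner_sub_left, inner_sub_right] at h₁ h₂ ⊢
  linear_combination h₁ + h₂

theorem exists_gram_eq_gram_add_gram [Finite ι] (f : ι → E) (A : Set ι) :
    ∃ w : ι → E, (∀ a ∈ A, w a = f a) ∧ (∀ v, (∀ a ∈ A, ⟪f a, f v⟫_𝕜 = 0) → w v = 0) ∧
      gram 𝕜 f = gram 𝕜 w + gram 𝕜 (f - w) := by
  set K := Submodule.span 𝕜 (f '' A)
  have : FiniteDimensional 𝕜 K := FiniteDimensional.span_of_finite 𝕜 ((Set.toFinite A).image f)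
  refine ⟨fun v => K.starProjection (f v), fun a ha => ?_, fun v hv => ?_, ?_⟩
  · exact K.starProjection_eq_self_iff.mpr (Submodule.subset_span ⟨a, ha, rfl⟩)
  · have hK : K ≤ (𝕜 ∙ f v)ᗮ := Submodule.span_le.mpr <| by
      rintro _ ⟨a, ha, rfl⟩
      exact Submodule.mem_orthogonal_singleton_iff_inner_left.mpr (hv a ha)
    have : f v ∈ Kᗮ := (K.mem_orthogonal _).mpr fun u hu =>
      Submodule.mem_orthogonal_singleton_iff_inner_left.mp (hK hu)
    change K.starProjection (f v) = 0
    rw [Submodule.starProjection_apply, K.orthogonalProjectionOnto_eq_zero_iff.mpr this, K.coe_zero]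
  · ext u v
    exact inner_eq_inner_starProjection_add K (f u) (f v)

theorem Matrix.PosSemidef.exists_eq_add_of_cover [Fintype ι] {P : Matrix ι ι 𝕜}
    (hP : P.PosSemidef) (J : Set ι) (D : κ → Set ι)
    (hcov : ∀ u v, P u v ≠ 0 → (u ∈ J ∧ v ∈ J) ∨ ∃ k, u ∈ D k ∧ v ∈ D k)
    (hsep : ∀ u ∈ J, ∀ v ∈ J, (∃ k, u ∈ D k) → (∃ k, v ∈ D k) → ∃ k, u ∈ D k ∧ v ∈ D k) :
    ∃ G R : Matrix ι ι 𝕜, P = G + R ∧ G.PosSemidef ∧ R.PosSemidef ∧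
      (∀ u v, G u v ≠ 0 → u ∈ J ∧ v ∈ J) ∧ ∀ u v, R u v ≠ 0 → ∃ k, u ∈ D k ∧ v ∈ D k := by
  obtain ⟨f, rfl⟩ := hP.exists_eq_gram
  set A := {a | a ∈ J ∧ ∀ k, a ∉ D k}
  obtain ⟨w, hwA, hw0, hsplit⟩ := exists_gram_eq_gram_add_gram (𝕜 := 𝕜) f A
  have hwJ : ∀ v, w v ≠ 0 → v ∈ J := by
    intro v hv
    by_contra hvJ
    refine hv (hw0 v fun a ha => ?_)
    by_contra hav
    rcases hcov a v hav with ⟨-, h⟩ | ⟨k, hak, -⟩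
    exacts [hvJ h, ha.2 k hak]
  have hJ : ∀ u v, gram 𝕜 w u v ≠ 0 → u ∈ J ∧ v ∈ J := fun u v h =>
    ⟨hwJ u fun hu => h (by simp [gram_apply, hu]), hwJ v fun hv => h (by simp [gram_apply, hv])⟩
  have hD : ∀ u ∈ J, ∀ v ∈ J, u ∉ A → v ∉ A → ∃ k, u ∈ D k ∧ v ∈ D k := by
    intro u hu v hv huA hvA
    simp only [A, Set.mem_ofPred_eq, not_and, not_forall, not_not] at huA hvA
    exact hsep u hu v hv (huA hu) (hvA hv)
  refine ⟨gram 𝕜 w, gram 𝕜 (f - w), hsplit, posSemidef_gram _ _, posSemidef_gram _ _, hJ, ?_⟩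
  intro u v h
  have hA : ∀ x, (f - w) x ≠ 0 → x ∉ A := fun x hx ha => hx (by simp [hwA x ha])
  have huA := hA u fun hu => h (by simp [gram_apply, hu])
  have hvA := hA v fun hv => h (by simp [gram_apply, hv])
  by_cases hG : gram 𝕜 w u v = 0
  · have hP : gram 𝕜 f u v ≠ 0 := by rwa [hsplit, add_apply, hG, zero_add]
    rcases hcov u v hP with ⟨hu, hv⟩ | hk
    exacts [hD u hu v hv huA hvA, hk]
  · obtain ⟨hu, hv⟩ := hJ u v hG
    exact hD u hu v hv huA hvA

end Gram

section RunningIntersection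

variable {α : Type*} [DecidableEq α]

def HasRunningIntersection {l : ℕ} (C : Fin l → Finset α) : Prop :=
  ∀ i : Fin l, (0 : ℕ) < i.1 → ∃ p : Fin l, p < i ∧ C i ∩ (Finset.Iio i).biUnion C ⊆ C p

variable {l : ℕ} {C : Fin (l + 1) → Finset α}

theorem HasRunningIntersection.castSucc (hC : HasRunningIntersection C) :
    HasRunningIntersection fun k : Fin l => C k.castSucc := by
  intro i hi
  obtain ⟨p, hp, hsub⟩ := hC i.castSucc hi
  obtain ⟨p, rfl⟩ := Fin.exists_castSucc_eq.mpr (hp.trans (Fin.castSucc_lt_last i)).ne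
  refine ⟨p, Fin.castSucc_lt_castSucc_iff.mp hp, fun x hx => hsub ?_⟩
  obtain ⟨hxi, hx⟩ := Finset.mem_inter.mp hx
  obtain ⟨j, hj, hxj⟩ := Finset.mem_biUnion.mp hx
  exact Finset.mem_inter.mpr ⟨hxi, Finset.mem_biUnion.mpr
    ⟨j.castSucc, Finset.mem_Iio.mpr (Fin.castSucc_lt_castSucc_iff.mpr (Finset.mem_Iio.mp hj)), hxj⟩⟩

theorem HasRunningIntersection.exists_castSucc_of_mem_last (hC : HasRunningIntersection C)
    {u v : α} (hu : u ∈ C (Fin.last l)) (hv : v ∈ C (Fin.last l))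
    (hu' : ∃ k : Fin l, u ∈ C k.castSucc) (hv' : ∃ k : Fin l, v ∈ C k.castSucc) :
    ∃ k : Fin l, u ∈ C k.castSucc ∧ v ∈ C k.castSucc := by
  obtain ⟨p, hp, hsub⟩ := hC (Fin.last l) (hu'.elim fun k _ => Nat.zero_lt_of_lt k.2)
  obtain ⟨p, rfl⟩ := Fin.exists_castSucc_eq.mpr hp.ne
  have hmem : ∀ x ∈ C (Fin.last l), (∃ k : Fin l, x ∈ C k.castSucc) → x ∈ C p.castSucc :=
    fun x hx ⟨k, hxk⟩ => hsub (Finset.mem_inter.mpr ⟨hx, Finset.mem_biUnion.mpr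
      ⟨k.castSucc, Finset.mem_Iio.mpr (Fin.castSucc_lt_last k), hxk⟩⟩)
  exact ⟨p, hmem u hu hu', hmem v hv hv'⟩

end RunningIntersection

section CliqueSel

variable {n : ℕ} {κ : Type*}

theorem cliqueSel_mul_apply (J : Finset (Fin n)) (M : Matrix {x // x ∈ J} κ ℝ) (u : Fin n)
    (k : κ) : (cliqueSel J * M) u k = if h : u ∈ J then M ⟨u, h⟩ k else 0 := by
  rw [mul_apply]
  split_ifs with hu
  · rw [Fintype.sum_eq_single ⟨u, hu⟩ fun j hj => ?_]
    · simp [cliqueSel]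
    · simp only [cliqueSel, ite_mul, one_mul, zero_mul, ite_eq_right_iff]
      rintro rfl
      exact (hj rfl).elim
  · refine Finset.sum_eq_zero fun j _ => ?_
    simp [cliqueSel, show u ≠ j from fun h => hu (h ▸ j.2)]

theorem mul_cliqueSel_transpose_apply (J : Finset (Fin n)) (M : Matrix κ {x // x ∈ J} ℝ) (k : κ)
    (v : Fin n) : (M * (cliqueSel J)ᵀ) k v = if h : v ∈ J then M k ⟨v, h⟩ else 0 := by
  rw [← transpose_apply (M * _), transpose_mul, transpose_transpose, cliqueSel_mul_apply]
  rfl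

theorem cliqueSel_mul_submatrix_mul_transpose (J : Finset (Fin n)) (M : Matrix (Fin n) (Fin n) ℝ)
    (hM : ∀ u v, M u v ≠ 0 → u ∈ J ∧ v ∈ J) :
    cliqueSel J * (M.submatrix (↑) (↑) : Matrix J J ℝ) * (cliqueSel J)ᵀ = M := by
  ext u v
  by_cases huv : u ∈ J ∧ v ∈ J
  · simp [mul_cliqueSel_transpose_apply, cliqueSel_mul_apply, huv.1, huv.2]
  · have hMuv : M u v = 0 := not_imp_comm.mp (hM u v) huv
    rw [not_and_or] at huv
    rcases huv with hu | hv
    · simp [mul_cliqueSel_transpose_apply, cliqueSel_mul_apply, hu, hMuv]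
    · simp [mul_cliqueSel_transpose_apply, hv, hMuv]

end CliqueSel

theorem exists_posSemidef_cliqueSel_decomposition {n l : ℕ} {C : Fin l → Finset (Fin n)}
    (hC : HasRunningIntersection C) {P : Matrix (Fin n) (Fin n) ℝ} (hP : P.PosSemidef)
    (hcov : ∀ u v, P u v ≠ 0 → ∃ k, u ∈ C k ∧ v ∈ C k) :
    ∃ Pc : (i : Fin l) → Matrix {x // x ∈ C i} {x // x ∈ C i} ℝ,
      (∀ i, (Pc i).PosSemidef) ∧ P = ∑ i, cliqueSel (C i) * Pc i * (cliqueSel (C i))ᵀ := by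
  induction l generalizing P with
  | zero =>
    refine ⟨finZeroElim, finZeroElim, ?_⟩
    ext u v
    by_contra h
    obtain ⟨k, -⟩ := hcov u v (by simpa using h)
    exact k.elim0
  | succ l ih =>
    obtain ⟨G, R, rfl, hG, hR, hGJ, hRD⟩ := hP.exists_eq_add_of_cover
      (C (Fin.last l) : Set (Fin n)) (fun k : Fin l => (C k.castSucc : Set (Fin n)))
      (fun u v huv => by
        obtain ⟨k, hk⟩ := hcov u v huv
        induction k using Fin.lastCases with
        | last => exact .inl hk
        | cast k => exact .inr ⟨k, hk⟩)
      (fun u hu v hv => hC.exists_castSucc_of_mem_last hu hv)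
    obtain ⟨Pc, hPc, rfl⟩ := ih hC.castSucc hR hRD
    refine ⟨Fin.lastCases (G.submatrix (↑) (↑)) Pc, fun i => ?_, ?_⟩
    · induction i using Fin.lastCases with
      | last => simpa using hG.submatrix _
      | cast k => simpa using hPc k
    rw [Fin.sum_univ_castSucc]
    simp only [Fin.lastCases_castSucc, Fin.lastCases_last]
    rw [cliqueSel_mul_submatrix_mul_transpose _ _ hGJ, add_comm]

theorem SimpleGraph.exists_isMaxClique_superset {V : Type*} [Finite V] (G : SimpleGraph V)
    {s : Finset V} (hs : G.IsClique ↑s) : ∃ t, G.IsMaxClique t ∧ s ⊆ t := by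
  obtain ⟨t, hst, ht⟩ := Finite.exists_le_maximal (p := fun t : Finset V => G.IsClique ↑t) hs
  exact ⟨t, ⟨ht.prop, fun t' ht' htt' => le_antisymm htt' (ht.2 ht' htt')⟩, hst⟩

theorem SimpleGraph.exists_mem_mem_of_forall_isMaxClique {V : Type*} [Finite V] [DecidableEq V]
    {G : SimpleGraph V} {ι : Type*} {C : ι → Finset V}
    (hall : ∀ s, G.IsMaxClique s → ∃ i, C i = s) {u v : V} (huv : u ≠ v → G.Adj u v) :
    ∃ i, u ∈ C i ∧ v ∈ C i := by
  obtain ⟨t, ht, hsub⟩ := G.exists_isMaxClique_superset (s := {u, v})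
    (by rw [Finset.coe_pair]; exact G.isClique_pair.mpr huv)
  obtain ⟨i, rfl⟩ := hall t ht
  exact ⟨i, hsub (by simp), hsub (by simp)⟩

theorem agler_chordal_decomposition_general {n l : ℕ} (Q : SimpleGraph (Fin n))
    (C : Fin l → Finset (Fin n))
    (hall : ∀ s : Finset (Fin n), Q.IsMaxClique s → ∃ i, C i = s)
    -- running intersection property of the ordering:
    (hRIP : ∀ i : Fin l, (0 : ℕ) < i.1 →
      ∃ p : Fin l, p < i ∧ C i ∩ (Finset.Iio i).biUnion C ⊆ C p)
    (H : Matrix (Fin n) (Fin n) ℝ)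
    (hneg : (-H).PosSemidef)
    (hsparse : ∀ i j : Fin n, i ≠ j → H i j ≠ 0 → Q.Adj i j) :
    ∃ Hc : (i : Fin l) → Matrix {x // x ∈ C i} {x // x ∈ C i} ℝ,
      (∀ i, (-(Hc i)).PosSemidef) ∧
      H = ∑ i : Fin l, cliqueSel (C i) * Hc i * (cliqueSel (C i))ᵀ := by
  obtain ⟨P, hP, hsum⟩ := exists_posSemidef_cliqueSel_decomposition (P := -H) hRIP hneg
    fun u v huv => SimpleGraph.exists_mem_mem_of_forall_isMaxClique hall
      fun hne => hsparse u v hne (by simpa using huv)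
  refine ⟨fun i => -P i, by simpa using hP, ?_⟩
  simp [← hsum]

/-- **Agler's decomposition theorem.**  Let `Q` be a chordal graph on `{1,…,n}` with
maximal cliques `C 0, …, C (l-1)` ordered to satisfy the running intersection
property.  Then any negative semidefinite `H ∈ 𝐒ⁿ` whose sparsity graph is a
subgraph of `Q` can be written as `H = ∑ i, E i * H i * (E i)ᵀ` with each
`H i ∈ 𝐒^{|C i|}` negative semidefinite. -/
theorem agler_chordal_decomposition {n l : ℕ} (Q : SimpleGraph (Fin n))
    (hQ : Q.IsChordal)
    (C : Fin l → Finset (Fin n))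
    (hclique : ∀ i, Q.IsMaxClique (C i))
    (hall : ∀ s : Finset (Fin n), Q.IsMaxClique s → ∃ i, C i = s)
    -- running intersection property of the ordering:
    (hRIP : ∀ i : Fin l, (0 : ℕ) < i.1 →
      ∃ p : Fin l, p < i ∧ C i ∩ (Finset.Iio i).biUnion C ⊆ C p)
    (H : Matrix (Fin n) (Fin n) ℝ)
    (hsymm : H.IsSymm)
    (hneg : (-H).PosSemidef)
    (hsparse : ∀ i j : Fin n, i ≠ j → H i j ≠ 0 → Q.Adj i j) :
    ∃ Hc : (i : Fin l) → Matrix {x // x ∈ C i} {x // x ∈ C i} ℝ,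
      (∀ i, (-(Hc i)).PosSemidef) ∧
      H = ∑ i : Fin l, cliqueSel (C i) * Hc i * (cliqueSel (C i))ᵀ :=
  agler_chordal_decomposition_general Q C hall hRIP H hneg hsparse
end

section
/- Suppose Δ: L_2^d → L_2^d satisfies the frequency-domain IQC defined by a bounded self-adjoint multiplier Π, and the frequency-domain inequality [G(jω); I]* Π(jω) [G(jω); I] ⪯ -εI holds for all ω ∈ [0,∞] for some ε > 0, where G ∈ RH_∞^{m×m}. Then for every square-integrable signal pair (p,q) with p = Gq and q = Δ(p), one has p = 0 and q = 0 (i.e., the only L_2 solution of the feedback loop is zero). -/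
open scoped InnerProductSpace

/-- **IQC stability theorem (quadratic-form formulation).**  Let the signal space
be a complex Hilbert space `Hs` (e.g. `L₂^m` after Fourier/Parseval
identification), let `Π = [P11 P12; P21 P22]` be a bounded self-adjoint
multiplier, `G` a bounded (stable) system operator and `Δ` an uncertainty
satisfying the IQC defined by `Π`.  If the frequency-domain inequality
`[G; I]* Π [G; I] ⪯ -ε I` holds (i.e. the quadratic form of `Π` evaluated at
`(G q, q)` is at most `-ε ‖q‖²` for all `q`), then the only square-integrable
solution of the loop `p = G q`, `q = Δ p` is `p = 0`, `q = 0`. -/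
theorem iqc_stability {Hs : Type*} [NormedAddCommGroup Hs] [InnerProductSpace ℂ Hs]
    [CompleteSpace Hs]
    (P11 P12 P21 P22 : Hs →L[ℂ] Hs)
    (hP11 : IsSelfAdjoint P11) (hP22 : IsSelfAdjoint P22)
    (hP12 : P21 = ContinuousLinearMap.adjoint P12)
    (G : Hs →L[ℂ] Hs) (Δ : Hs → Hs) (ε : ℝ) (hε : 0 < ε)
    -- `Δ ∈ IQC(Π)` :
    (hIQC : ∀ v : Hs,
      0 ≤ (⟪v, P11 v⟫_ℂ + ⟪v, P12 (Δ v)⟫_ℂ + ⟪Δ v, P21 v⟫_ℂ + ⟪Δ v, P22 (Δ v)⟫_ℂ).re)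
    -- `[G; I]* Π [G; I] ⪯ -ε I` :
    (hLMI : ∀ q : Hs,
      (⟪G q, P11 (G q)⟫_ℂ + ⟪G q, P12 q⟫_ℂ + ⟪q, P21 (G q)⟫_ℂ + ⟪q, P22 q⟫_ℂ).re
        ≤ -ε * ‖q‖ ^ 2) :
    ∀ p q : Hs, p = G q → q = Δ p → p = 0 ∧ q = 0 := by
  intro p q hp hq
  have h1 := hIQC p
  rw [← hq] at h1
  have h2 := hLMI q
  rw [← hp] at h2
  have hq0 : ‖q‖ = 0 := by
    by_contra h
    have hn : 0 < ‖q‖ := lt_of_le_of_ne (norm_nonneg q) (Ne.symm h)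
    nlinarith [mul_pos hε (pow_pos hn 2)]
  have : q = 0 := norm_eq_zero.mp hq0
  subst this
  simp [hp]
end

section
/- Let Π be a 2×2 block Hermitian matrix with Π = [Π_11, Π_12; Π_21, Π_22], and let G_pq, G_pw, G_zq, G_zw, Γ be complex matrices of compatible dimensions such that I - Γ G_zw is invertible. Define the lumped matrix Ḡ = G_pq + G_pw (I - Γ G_zw)^{-1} Γ G_zq. If there exists a Hermitian positive definite matrix X and ε > 0 such that [G_pq, G_pw; I, 0]* Π [G_pq, G_pw; I, 0] - [-G_zq*Γ^T; I - G_zw*Γ^T] X [-Γ G_zq, I - Γ G_zw] ⪯ -εI, then [Ḡ; I]* Π [Ḡ; I] ⪯ -εI. -/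
open Matrix
open scoped ComplexOrder

/-!
Put `W = (I - Γ G_zw)⁻¹ Γ G_zq` and `E = [I; W]`. Then `[-Γ G_zq, I - Γ G_zw] E = 0` and
`[G_pq G_pw; I 0] E = [Ḡ; I]`, so the congruence of the sparse LMI by `E` reads
`[Ḡ; I]* Π [Ḡ; I] ⪯ -ε E* E = -ε (I + W* W) ⪯ -ε I`.
-/

namespace Matrix

variable {R : Type*} [CommRing R] [StarRing R] {k l p r : Type*}
  [Fintype k] [Fintype l] [Fintype p] [Fintype r] [DecidableEq p]

theorem conjTranspose_fromRows_one_mul_self (W : Matrix r p R) :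
    (fromRows (1 : Matrix p p R) W)ᴴ * fromRows (1 : Matrix p p R) W = 1 + Wᴴ * W := by
  rw [conjTranspose_fromRows_eq_fromCols_conjTranspose, fromCols_mul_fromRows,
    conjTranspose_one, Matrix.one_mul]

theorem conjTranspose_mul_neg_sub_add_smul_one_mul [DecidableEq r] (A : Matrix k (p ⊕ r) R)
    (P : Matrix k k R) (C : Matrix l (p ⊕ r) R) (X : Matrix l l R) (c : R)
    (E : Matrix (p ⊕ r) p R) :
    Eᴴ * (-(Aᴴ * P * A - Cᴴ * X * C + c • (1 : Matrix (p ⊕ r) (p ⊕ r) R))) * E =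
      -((A * E)ᴴ * P * (A * E)) + (C * E)ᴴ * X * (C * E) - c • (Eᴴ * E) := by
  simp only [conjTranspose_mul, Matrix.mul_neg, Matrix.neg_mul, Matrix.mul_add, Matrix.add_mul,
    Matrix.mul_sub, Matrix.sub_mul, Matrix.mul_smul, Matrix.smul_mul, Matrix.one_mul,
    Matrix.mul_assoc]
  abel

theorem PosSemidef.restrict_to_graph [PartialOrder R] [StarOrderedRing R] [DecidableEq r]
    {A : Matrix k (p ⊕ r) R} {P : Matrix k k R} {C : Matrix l (p ⊕ r) R} {X : Matrix l l R}
    {c : R} (hc : 0 ≤ c)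
    (hS : (-(Aᴴ * P * A - Cᴴ * X * C + c • (1 : Matrix (p ⊕ r) (p ⊕ r) R))).PosSemidef)
    {W : Matrix r p R} (hCW : C * fromRows (1 : Matrix p p R) W = 0) :
    (-((A * fromRows (1 : Matrix p p R) W)ᴴ * P * (A * fromRows (1 : Matrix p p R) W) +
      c • (1 : Matrix p p R))).PosSemidef := by
  have hcongr :
      -((A * fromRows (1 : Matrix p p R) W)ᴴ * P * (A * fromRows (1 : Matrix p p R) W) +
        c • (1 : Matrix p p R)) =
      (fromRows (1 : Matrix p p R) W)ᴴ * (-(Aᴴ * P * A - Cᴴ * X * C + c • 1)) *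
        fromRows (1 : Matrix p p R) W + c • (Wᴴ * W) := by
    rw [conjTranspose_mul_neg_sub_add_smul_one_mul, hCW, conjTranspose_fromRows_one_mul_self]
    simp only [Matrix.mul_zero, add_zero, smul_add]
    abel
  rw [hcongr]
  exact (hS.conjTranspose_mul_mul_same _).add ((posSemidef_conjTranspose_mul_self W).smul hc)

end Matrix

theorem sparse_implies_lumped_general {d m nz : ℕ}
    (Gpq : Matrix (Fin d) (Fin d) ℂ) (Gpw : Matrix (Fin d) (Fin m) ℂ)
    (Gzq : Matrix (Fin nz) (Fin d) ℂ) (Gzw : Matrix (Fin nz) (Fin m) ℂ)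
    (Gam : Matrix (Fin m) (Fin nz) ℂ)
    (P11 P12 P21 P22 : Matrix (Fin d) (Fin d) ℂ)
    (hinv : IsUnit (1 - Gam * Gzw).det)
    (X : Matrix (Fin m) (Fin m) ℂ)
    (ε : ℝ) (hε : 0 < ε)
    (hsparse :
      (-(((fromBlocks Gpq Gpw (1 : Matrix (Fin d) (Fin d) ℂ) 0)ᴴ *
            fromBlocks P11 P12 P21 P22 *
            fromBlocks Gpq Gpw (1 : Matrix (Fin d) (Fin d) ℂ) 0 -
          (fromCols (-(Gam * Gzq)) (1 - Gam * Gzw))ᴴ * X *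
            fromCols (-(Gam * Gzq)) (1 - Gam * Gzw)) +
         (ε : ℂ) • (1 : Matrix (Fin d ⊕ Fin m) (Fin d ⊕ Fin m) ℂ))).PosSemidef) :
    (-(((fromRows (Gpq + Gpw * (1 - Gam * Gzw)⁻¹ * Gam * Gzq) (1 : Matrix (Fin d) (Fin d) ℂ))ᴴ *
          fromBlocks P11 P12 P21 P22 *
          fromRows (Gpq + Gpw * (1 - Gam * Gzw)⁻¹ * Gam * Gzq) (1 : Matrix (Fin d) (Fin d) ℂ)) +
       (ε : ℂ) • (1 : Matrix (Fin d) (Fin d) ℂ))).PosSemidef := by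
  set W := (1 - Gam * Gzw)⁻¹ * (Gam * Gzq)
  have hC : fromCols (-(Gam * Gzq)) (1 - Gam * Gzw) *
      fromRows (1 : Matrix (Fin d) (Fin d) ℂ) W = 0 := by
    rw [fromCols_mul_fromRows, Matrix.mul_one, Matrix.mul_nonsing_inv_cancel_left _ _ hinv,
      neg_add_cancel]
  have hA : fromBlocks Gpq Gpw (1 : Matrix (Fin d) (Fin d) ℂ) 0 *
      fromRows (1 : Matrix (Fin d) (Fin d) ℂ) W =
      fromRows (Gpq + Gpw * (1 - Gam * Gzw)⁻¹ * Gam * Gzq) (1 : Matrix (Fin d) (Fin d) ℂ) := by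
    simp only [fromBlocks_mul_fromRows, Matrix.mul_one, Matrix.zero_mul, add_zero, W,
      Matrix.mul_assoc]
  rw [← hA]
  exact hsparse.restrict_to_graph (Complex.zero_le_real.mpr hε.le) hC

/-- **Sparse IQC LMI implies lumped IQC LMI.**  With `Ḡ = G_pq + G_pw (I - Γ G_zw)⁻¹ Γ G_zq`,
if there are a Hermitian positive definite `X` and `ε > 0` with
`[G_pq G_pw; I 0]* Π [G_pq G_pw; I 0] - [-G_zq*Γᵀ; I - G_zw*Γᵀ] X [-Γ G_zq, I - Γ G_zw] ⪯ -ε I`,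
then `[Ḡ; I]* Π [Ḡ; I] ⪯ -ε I`. -/
theorem sparse_implies_lumped {d m nz : ℕ}
    (Gpq : Matrix (Fin d) (Fin d) ℂ) (Gpw : Matrix (Fin d) (Fin m) ℂ)
    (Gzq : Matrix (Fin nz) (Fin d) ℂ) (Gzw : Matrix (Fin nz) (Fin m) ℂ)
    (Gam : Matrix (Fin m) (Fin nz) ℂ)
    (P11 P12 P21 P22 : Matrix (Fin d) (Fin d) ℂ)
    (hP : (fromBlocks P11 P12 P21 P22).IsHermitian)
    (hinv : IsUnit (1 - Gam * Gzw).det)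
    (X : Matrix (Fin m) (Fin m) ℂ) (hX : X.PosDef)
    (ε : ℝ) (hε : 0 < ε)
    (hsparse :
      (-(((fromBlocks Gpq Gpw (1 : Matrix (Fin d) (Fin d) ℂ) 0)ᴴ *
            fromBlocks P11 P12 P21 P22 *
            fromBlocks Gpq Gpw (1 : Matrix (Fin d) (Fin d) ℂ) 0 -
          (fromCols (-(Gam * Gzq)) (1 - Gam * Gzw))ᴴ * X *
            fromCols (-(Gam * Gzq)) (1 - Gam * Gzw)) +
         (ε : ℂ) • (1 : Matrix (Fin d ⊕ Fin m) (Fin d ⊕ Fin m) ℂ))).PosSemidef) :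
    (-(((fromRows (Gpq + Gpw * (1 - Gam * Gzw)⁻¹ * Gam * Gzq) (1 : Matrix (Fin d) (Fin d) ℂ))ᴴ *
          fromBlocks P11 P12 P21 P22 *
          fromRows (Gpq + Gpw * (1 - Gam * Gzw)⁻¹ * Gam * Gzq) (1 : Matrix (Fin d) (Fin d) ℂ)) +
       (ε : ℂ) • (1 : Matrix (Fin d) (Fin d) ℂ))).PosSemidef :=
  sparse_implies_lumped_general Gpq Gpw Gzq Gzw Gam P11 P12 P21 P22 hinv X ε hε hsparse
end

section
/- Let Π be a Hermitian block matrix and G_pq, G_pw, G_zq, G_zw, Γ as above with I - Γ G_zw invertible and Ḡ = G_pq + G_pw (I - Γ G_zw)^{-1} Γ G_zq. If [Ḡ; I]* Π [Ḡ; I] ≺ 0 (strictly), then there exists a scalar x > 0 such that with X = xI the sparse inequality [G_pq, G_pw; I, 0]* Π [G_pq, G_pw; I, 0] - [-G_zq*Γ^T; I - G_zw*Γ^T] X [-Γ G_zq, I - Γ G_zw] ≺ 0 holds. -/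
open Matrix
open scoped ComplexOrder

/-!
Change coordinates from `(q, w)` to `(q, v)`, where `v = (1 - Γ G_zw) w - Γ G_zq q` is the residual
of the loop equation `w = Γ (G_zq q + G_zw w)`. In these coordinates the multiplier term becomes
`x ‖v‖²`, and the `(q, q)` block of the `Π`-term is the lumped LMI. A Schur complement with respect
to that negative definite block shows that the sparse LMI holds as soon as `x` is large.
-/

open Filter

section PosDef

variable {𝕜 m n : Type*} [RCLike 𝕜] [Fintype m] [DecidableEq m] [Fintype n] [DecidableEq n]

open scoped MatrixOrder in
lemma Matrix.IsHermitian.eventually_posDef_smul_one_sub {H : Matrix n n 𝕜} (hH : H.IsHermitian) :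
    ∀ᶠ x : ℝ in atTop, (x • (1 : Matrix n n 𝕜) - H).PosDef := by
  obtain ⟨c, hc⟩ := (finite_real_spectrum (A := H)).bddAbove
  have hle : H ≤ algebraMap ℝ (Matrix n n 𝕜) c :=
    le_algebraMap_of_spectrum_le hc hH.isSelfAdjoint
  filter_upwards [eventually_gt_atTop c] with x hx
  have hsplit : x • (1 : Matrix n n 𝕜) - H = (algebraMap ℝ _ c - H) + (x - c) • 1 := by
    rw [Algebra.algebraMap_eq_smul_one, sub_smul]
    abel
  rw [hsplit]
  exact (PosDef.one.smul (sub_pos.2 hx)).posSemidef_add (Matrix.le_iff.mp hle)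

omit [DecidableEq n] in
lemma Matrix.PosDef.posDef_fromBlocks₁₁_iff {A : Matrix m m 𝕜} (B : Matrix m n 𝕜)
    (D : Matrix n n 𝕜) (hA : A.PosDef) :
    (fromBlocks A B Bᴴ D).PosDef ↔ (D - Bᴴ * A⁻¹ * B).PosDef := by
  have := hA.isUnit.invertible
  rw [posDef_iff_dotProduct_mulVec, posDef_iff_dotProduct_mulVec,
    IsHermitian.fromBlocks₁₁ _ _ hA.1]
  refine and_congr_right fun _ => ⟨fun h y hy => ?_, fun h v hv => ?_⟩
  · have := h (x := -((A⁻¹ * B) *ᵥ y) ⊕ᵥ y)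
      fun h0 => hy (by simpa using congrArg (· ∘ Sum.inr) h0)
    rwa [dotProduct_mulVec, schur_complement_eq₁₁ B D _ _ hA.1, neg_add_cancel, dotProduct_zero,
      zero_add, ← dotProduct_mulVec] at this
  · rw [dotProduct_mulVec, ← Sum.elim_comp_inl_inr v, schur_complement_eq₁₁ B D _ _ hA.1,
      ← dotProduct_mulVec, ← dotProduct_mulVec (star (v ∘ Sum.inr))]
    by_cases hy : v ∘ Sum.inr = 0
    · have hx : v ∘ Sum.inl ≠ 0 := fun hx => hv (by rw [← Sum.elim_comp_inl_inr v, hx, hy]; simp)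
      simpa [hy] using hA.dotProduct_mulVec_pos hx
    · exact add_pos_of_nonneg_of_pos (hA.posSemidef.dotProduct_mulVec_nonneg _) (h hy)

lemma Matrix.PosDef.eventually_posDef_fromBlocks_smul_one_sub {A : Matrix m m 𝕜}
    (hA : A.PosDef) (B : Matrix m n 𝕜) {D : Matrix n n 𝕜} (hD : D.IsHermitian) :
    ∀ᶠ x : ℝ in atTop, (fromBlocks A B Bᴴ (x • 1 - D)).PosDef := by
  filter_upwards [(hD.add (isHermitian_conjTranspose_mul_mul B hA.1.inv)
    ).eventually_posDef_smul_one_sub] with x hx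
  rwa [hA.posDef_fromBlocks₁₁_iff, sub_sub]

end PosDef

lemma Matrix.conjTranspose_fromCols_mul_mul_fromCols {R r m n : Type*} [Fintype r]
    [Semiring R] [StarRing R] (F : Matrix r m R) (G : Matrix r n R) (P : Matrix r r R) :
    (fromCols F G)ᴴ * P * fromCols F G =
      fromBlocks (Fᴴ * P * F) (Fᴴ * P * G) (Gᴴ * P * F) (Gᴴ * P * G) := by
  rw [conjTranspose_fromCols_eq_fromRows_conjTranspose, fromRows_mul, fromRows_mul_fromCols]

lemma Matrix.conjTranspose_mul_sub_mul_eq_fromBlocks {R r s m n : Type*} [Fintype r] [Fintype s]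
    [Fintype n] [DecidableEq n] [CommRing R] [StarRing R] {M : Matrix r s R} {C : Matrix n s R}
    {V : Matrix s (m ⊕ n) R} {F : Matrix r m R} {G : Matrix r n R} (hM : M * V = fromCols F G)
    (hC : C * V = fromCols 0 1) (P : Matrix r r R) (X : Matrix n n R) :
    Vᴴ * (Mᴴ * P * M - Cᴴ * X * C) * V =
      fromBlocks (Fᴴ * P * F) (Fᴴ * P * G) (Gᴴ * P * F) (Gᴴ * P * G - X) := by
  calc Vᴴ * (Mᴴ * P * M - Cᴴ * X * C) * V = (M * V)ᴴ * P * (M * V) - (C * V)ᴴ * X * (C * V) := by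
        simp only [conjTranspose_mul, Matrix.mul_sub, Matrix.sub_mul, Matrix.mul_assoc]
    _ = _ := by
      rw [hM, hC, conjTranspose_fromCols_mul_mul_fromCols, conjTranspose_fromCols_mul_mul_fromCols]
      ext (i | i) (j | j) <;> simp

section Interconnection

variable {R p q w z : Type*} [CommRing R] [Fintype q] [DecidableEq q] [Fintype w] [DecidableEq w]
  [Fintype z] (Gpq : Matrix p q R) (Gpw : Matrix p w R) (Gzq : Matrix z q R) (Gzw : Matrix z w R)
  (Γ : Matrix w z R)

/-- The substitution `(q, v) ↦ (q, w)` with `w = (1 - Γ G_zw)⁻¹ (Γ G_zq q + v)`. -/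
noncomputable def loopCoords : Matrix (q ⊕ w) (q ⊕ w) R :=
  fromBlocks 1 0 ((1 - Γ * Gzw)⁻¹ * (Γ * Gzq)) (1 - Γ * Gzw)⁻¹

variable {Gzq Gzw Γ}

variable (Gzq) in
lemma isUnit_loopCoords (h : IsUnit (1 - Γ * Gzw).det) : IsUnit (loopCoords Gzq Gzw Γ) := by
  rw [isUnit_iff_isUnit_det, loopCoords, det_fromBlocks_zero₁₂, det_one, one_mul]
  exact isUnit_nonsing_inv_det _ h

variable (Gzq Gzw Γ) in
lemma fromBlocks_mul_loopCoords :
    fromBlocks Gpq Gpw (1 : Matrix q q R) 0 * loopCoords Gzq Gzw Γ =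
      fromCols (fromRows (Gpq + Gpw * (1 - Γ * Gzw)⁻¹ * Γ * Gzq) 1)
        (fromRows (Gpw * (1 - Γ * Gzw)⁻¹) 0) := by
  simp [loopCoords, fromBlocks_multiply, fromCols_fromRows_eq_fromBlocks, Matrix.mul_assoc]

lemma fromCols_mul_loopCoords (h : IsUnit (1 - Γ * Gzw).det) :
    fromCols (-(Γ * Gzq)) (1 - Γ * Gzw) * loopCoords Gzq Gzw Γ = fromCols 0 1 := by
  simp [loopCoords, fromCols_mul_fromBlocks, ← Matrix.mul_assoc, mul_nonsing_inv _ h]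

end Interconnection

/-- **Non-conservativeness of the sparse reformulation.**  If the lumped IQC LMI
`[Ḡ; I]* Π [Ḡ; I] ≺ 0` holds strictly, where
`Ḡ = G_pq + G_pw (I - Γ G_zw)⁻¹ Γ G_zq`, then there is a scalar `x > 0` such
that, with `X = x I`, the sparse LMI
`[G_pq G_pw; I 0]* Π [G_pq G_pw; I 0] - [-G_zq*Γᵀ; I - G_zw*Γᵀ] X [-Γ G_zq, I - Γ G_zw] ≺ 0`
holds. -/
theorem lumped_implies_sparse {d m nz : ℕ}
    (Gpq : Matrix (Fin d) (Fin d) ℂ) (Gpw : Matrix (Fin d) (Fin m) ℂ)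
    (Gzq : Matrix (Fin nz) (Fin d) ℂ) (Gzw : Matrix (Fin nz) (Fin m) ℂ)
    (Gam : Matrix (Fin m) (Fin nz) ℂ)
    (P11 P12 P21 P22 : Matrix (Fin d) (Fin d) ℂ)
    (hP : (fromBlocks P11 P12 P21 P22).IsHermitian)
    (hinv : IsUnit (1 - Gam * Gzw).det)
    (hlumped :
      (-((fromRows (Gpq + Gpw * (1 - Gam * Gzw)⁻¹ * Gam * Gzq) (1 : Matrix (Fin d) (Fin d) ℂ))ᴴ *
          fromBlocks P11 P12 P21 P22 *
          fromRows (Gpq + Gpw * (1 - Gam * Gzw)⁻¹ * Gam * Gzq)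
            (1 : Matrix (Fin d) (Fin d) ℂ))).PosDef) :
    ∃ x : ℝ, 0 < x ∧
      (-(((fromBlocks Gpq Gpw (1 : Matrix (Fin d) (Fin d) ℂ) 0)ᴴ *
            fromBlocks P11 P12 P21 P22 *
            fromBlocks Gpq Gpw (1 : Matrix (Fin d) (Fin d) ℂ) 0 -
          (fromCols (-(Gam * Gzq)) (1 - Gam * Gzw))ᴴ *
            ((x : ℂ) • (1 : Matrix (Fin m) (Fin m) ℂ)) *
            fromCols (-(Gam * Gzq)) (1 - Gam * Gzw)))).PosDef := by
  set P := fromBlocks P11 P12 P21 P22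
  set F := fromRows (Gpq + Gpw * (1 - Gam * Gzw)⁻¹ * Gam * Gzq) (1 : Matrix (Fin d) (Fin d) ℂ)
  set G := fromRows (Gpw * (1 - Gam * Gzw)⁻¹) (0 : Matrix (Fin d) (Fin m) ℂ)
  have hB : (-(Fᴴ * P * G))ᴴ = -(Gᴴ * P * F) := by
    simp only [conjTranspose_neg, conjTranspose_mul, conjTranspose_conjTranspose, hP.eq,
      Matrix.mul_assoc]
  obtain ⟨x, hx, hblocks⟩ := ((eventually_gt_atTop 0).and
    (hlumped.eventually_posDef_fromBlocks_smul_one_sub (-(Fᴴ * P * G))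
      (isHermitian_conjTranspose_mul_mul G hP))).exists
  refine ⟨x, hx, (isUnit_loopCoords Gzq hinv).posDef_star_left_conjugate_iff.mp ?_⟩
  rw [star_eq_conjTranspose, Matrix.mul_neg, Matrix.neg_mul,
    conjTranspose_mul_sub_mul_eq_fromBlocks (fromBlocks_mul_loopCoords ..)
      (fromCols_mul_loopCoords hinv), fromBlocks_neg, neg_sub,
    Complex.coe_smul, ← hB]
  exact hblocks
end

section
/- For any index sets S_k ⊆ C_k satisfying the running intersection property structure, the consistency terms satisfy Σ_{k=1}^l E_k U^k(d) E_k^T = 0 for every choice of the vector d. -/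
open Matrix Finset

/-- Restriction of an `n × n` matrix to the principal submatrix indexed by `C`. -/
def restrictM {n : ℕ} (C : Finset (Fin n)) (A : Matrix (Fin n) (Fin n) ℝ) :
    Matrix {x // x ∈ C} {x // x ∈ C} ℝ :=
  fun i j => A i.1 j.1

/-- The separator consistency term `U^k(d)`. -/
def consistencyTerm {n l : ℕ} (C : Fin l → Finset (Fin n)) (parent : Fin l → Fin l)
    (d : Fin l → Matrix (Fin n) (Fin n) ℝ) (k : Fin l) :
    Matrix {x // x ∈ C k} {x // x ∈ C k} ℝ :=
  restrictM (C k) (d k) -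
    ∑ q ∈ Finset.univ.filter (fun q : Fin l => 0 < q.1 ∧ parent q = k),
      restrictM (C k) (d q)

def maskM {n : ℕ} (C : Finset (Fin n)) (A : Matrix (Fin n) (Fin n) ℝ) :
    Matrix (Fin n) (Fin n) ℝ :=
  Matrix.of fun i j => if i ∈ C ∧ j ∈ C then A i j else 0

lemma sel_restrict {n : ℕ} (C : Finset (Fin n)) (A : Matrix (Fin n) (Fin n) ℝ) :
    cliqueSel C * restrictM C A * (cliqueSel C)ᵀ = maskM C A := by
  ext i j
  simp only [Matrix.mul_apply, Matrix.transpose_apply, cliqueSel, restrictM, maskM,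
    Matrix.of_apply]
  by_cases hi : i ∈ C
  · by_cases hj : j ∈ C
    · rw [Finset.sum_eq_single (⟨j, hj⟩ : {x // x ∈ C})]
      · rw [Finset.sum_eq_single (⟨i, hi⟩ : {x // x ∈ C})]
        · simp [hi, hj]
        · intro b _ hb
          simp [Subtype.ext_iff] at hb ⊢
          intro h; exact absurd h.symm hb
        · simp
      · intro b _ hb
        have : j ≠ (b : Fin n) := fun h => hb (Subtype.ext h.symm)
        simp [this]
      · simp
    · simp only [hi, hj, and_false, if_false]
      apply Finset.sum_eq_zero
      intro b _
      have : j ≠ (b : Fin n) := fun h => hj (h ▸ b.2)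
      simp [this]
  · simp only [hi, false_and, if_false]
    apply Finset.sum_eq_zero
    intro b _
    rw [Finset.sum_eq_zero, zero_mul]
    intro a _
    have : i ≠ (a : Fin n) := fun h => hi (h ▸ a.2)
    simp [this]

lemma mask_eq {n : ℕ} (C : Finset (Fin n)) (A : Matrix (Fin n) (Fin n) ℝ)
    (h : ∀ i j, A i j ≠ 0 → i ∈ C ∧ j ∈ C) : maskM C A = A := by
  ext i j
  simp only [maskM, Matrix.of_apply]
  by_cases hA : A i j = 0
  · simp [hA]
  · simp [h i j hA]

/-- **Telescoping cancellation of the consistency terms.**  For separator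
variables `d` supported on the separators `S k = C k ∩ C (parent k)` (with no
variable at the root), the terms `U^k(d)` satisfy
`∑ₖ Eₖ Uᵏ(d) Eₖᵀ = 0` for every choice of `d`. -/
theorem consistency_terms_sum_zero {n l : ℕ}
    (C : Fin l → Finset (Fin n)) (parent : Fin l → Fin l)
    (hparent : ∀ i : Fin l, 0 < i.1 → parent i < i)
    (d : Fin l → Matrix (Fin n) (Fin n) ℝ)
    (hsupp : ∀ k : Fin l, 0 < k.1 → ∀ i j : Fin n, d k i j ≠ 0 →
      i ∈ C k ∩ C (parent k) ∧ j ∈ C k ∩ C (parent k))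
    (hroot : ∀ k : Fin l, k.1 = 0 → d k = 0) :
    ∑ k : Fin l,
      cliqueSel (C k) * consistencyTerm C parent d k * (cliqueSel (C k))ᵀ = 0 := by
  have key : ∀ k : Fin l,
      cliqueSel (C k) * consistencyTerm C parent d k * (cliqueSel (C k))ᵀ =
      maskM (C k) (d k) -
        ∑ q ∈ Finset.univ.filter (fun q : Fin l => 0 < q.1 ∧ parent q = k),
          maskM (C k) (d q) := by
    intro k
    simp only [consistencyTerm, Matrix.sub_mul, Matrix.mul_sub, Matrix.sum_mul,
      Matrix.mul_sum, sel_restrict]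
  simp only [key, Finset.sum_sub_distrib]
  rw [sub_eq_zero]
  have h1 : ∑ k : Fin l, maskM (C k) (d k)
      = ∑ k ∈ Finset.univ.filter (fun k : Fin l => 0 < k.1), d k := by
    rw [← Finset.sum_filter_add_sum_filter_not Finset.univ (fun k : Fin l => 0 < k.1)
      (fun k => maskM (C k) (d k))]
    have h2 : ∑ k ∈ Finset.univ.filter (fun k : Fin l => ¬ 0 < k.1),
        maskM (C k) (d k) = 0 := by
      apply Finset.sum_eq_zero
      intro k hk
      simp only [Finset.mem_filter, Nat.not_lt, Nat.le_zero] at hk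
      rw [hroot k hk.2]
      ext i j; simp [maskM]
    rw [h2, add_zero]
    apply Finset.sum_congr rfl
    intro k hk
    simp only [Finset.mem_filter] at hk
    exact mask_eq _ _ fun i j h => by
      have := hsupp k hk.2 i j h
      simp only [Finset.mem_inter] at this
      exact ⟨this.1.1, this.2.1⟩
  have h3 : ∀ k : Fin l, ∑ q ∈ Finset.univ.filter (fun q : Fin l => 0 < q.1 ∧ parent q = k),
      maskM (C k) (d q) = ∑ q ∈ Finset.univ.filter (fun q : Fin l => 0 < q.1 ∧ parent q = k), d q := by
    intro k
    apply Finset.sum_congr rfl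
    intro q hq
    simp only [Finset.mem_filter] at hq
    exact mask_eq _ _ fun i j h => by
      have := hsupp q hq.2.1 i j h
      simp only [Finset.mem_inter] at this
      rw [← hq.2.2]
      exact ⟨this.1.2, this.2.2⟩
  simp only [h3]
  rw [h1]
  have h4 : ∀ k : Fin l, (Finset.univ.filter (fun q : Fin l => 0 < q.1 ∧ parent q = k))
      = (Finset.univ.filter (fun q : Fin l => 0 < q.1)).filter (fun q => parent q = k) := by
    intro k; rw [Finset.filter_filter]
  simp only [h4]
  rw [Finset.sum_fiberwise (Finset.univ.filter (fun q : Fin l => 0 < q.1)) parent d]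
end
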